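/- (Lemma 2) Suppose F is mixed-monotone with respect to a decomposition function d. Define 𝒮 := {(x, x̂) ∈ ℝⁿ × ℝⁿ : x ⪯ x̂ and 0 ⪯_SE e(x, x̂)}, where e(x, x̂) = (d(x, w̲, x̂, w̄), d(x̂, w̄, x, w̲)) and 0 ⪯_SE e(x, x̂) means d(x, w̲, x̂, w̄) ⪰ 0 and d(x̂, w̄, x, w̲) ⪯ 0 componentwise. Let (a, â) : [0, ∞) → ℝⁿ × ℝⁿ be a solution of the deterministic embedding ODE with (a(0), â(0)) ∈ 𝒮. Then (a(t), â(t)) ∈ 𝒮 for all t ≥ 0, and (a(t₁), â(t₁)) ⪯_SE (a(t₂), â(t₂)) for all 0 ≤ t₁ ≤ t₂. -/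

import Mathlib

open Set Function Filter Topology

/-- A function is piecewise continuous on a set `s` if it is continuous on `s` off of
finitely many points. -/
def PiecewiseContinuousOn {α : Type*} [TopologicalSpace α] (w : ℝ → α) (s : Set ℝ) : Prop :=
  ∃ E : Finset ℝ, ContinuousOn w (s \ (E : Set ℝ))

/-- `d` is a decomposition function for the vector field `F` on state space `ℝⁿ` with
disturbance set `𝒲 = Set.Icc wl wu ⊆ ℝᵐ`:  `d` is locally Lipschitz, agrees with `F` on the
diagonal, `dᵢ` is nondecreasing in `xⱼ` for `j ≠ i`, nonincreasing in every component of `x̂`,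
nondecreasing in every component of `w` and nonincreasing in every component of `ŵ`. -/
def IsDecompositionFunction {n m : ℕ} (wl wu : Fin m → ℝ)
    (F : (Fin n → ℝ) → (Fin m → ℝ) → (Fin n → ℝ))
    (d : (Fin n → ℝ) → (Fin m → ℝ) → (Fin n → ℝ) → (Fin m → ℝ) → (Fin n → ℝ)) : Prop :=
  LocallyLipschitz
      (fun p : ((Fin n → ℝ) × (Fin m → ℝ)) × ((Fin n → ℝ) × (Fin m → ℝ)) =>
        d p.1.1 p.1.2 p.2.1 p.2.2)
    ∧ (∀ x : Fin n → ℝ, ∀ w ∈ Set.Icc wl wu, d x w x w = F x w)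
    ∧ (∀ (i j : Fin n), j ≠ i → ∀ (x xh : Fin n → ℝ) (s t : ℝ), s ≤ t →
        ∀ w ∈ Set.Icc wl wu, ∀ wh ∈ Set.Icc wl wu,
          d (Function.update x j s) w xh wh i ≤ d (Function.update x j t) w xh wh i)
    ∧ (∀ (i j : Fin n) (x xh : Fin n → ℝ) (s t : ℝ), s ≤ t →
        ∀ w ∈ Set.Icc wl wu, ∀ wh ∈ Set.Icc wl wu,
          d x w (Function.update xh j t) wh i ≤ d x w (Function.update xh j s) wh i)
    ∧ (∀ (i : Fin n) (k : Fin m) (x xh : Fin n → ℝ) (s t : ℝ),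
        wl k ≤ s → s ≤ t → t ≤ wu k →
        ∀ w ∈ Set.Icc wl wu, ∀ wh ∈ Set.Icc wl wu,
          d x (Function.update w k s) xh wh i ≤ d x (Function.update w k t) xh wh i)
    ∧ (∀ (i : Fin n) (k : Fin m) (x xh : Fin n → ℝ) (s t : ℝ),
        wl k ≤ s → s ≤ t → t ≤ wu k →
        ∀ w ∈ Set.Icc wl wu, ∀ wh ∈ Set.Icc wl wu,
          d x w xh (Function.update wh k t) i ≤ d x w xh (Function.update wh k s) i)

/-!
In the coordinates `(x, -x̂)` the southeast order becomes the componentwise order and the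
embedding system becomes cooperative: each component of the vector field is nondecreasing in
all other coordinates. For a locally Lipschitz cooperative field, a subsolution starting below a
supersolution stays below it, since `∑ᵢ (yᵢ - zᵢ)⁺` satisfies a Grönwall inequality.

The constant `(a(0), â(0))` is a subsolution because `0 ⪯_SE e(a(0), â(0))`, and time shifts of
the solution are solutions; comparing them shows that the solution is SE-monotone, which in turn
forces `0 ⪯_SE e(a(t), â(t))`. Finally `(â, a)` is a supersolution, because exchanging `w̲` and
`w̄` can only increase `d`; as `a(0) ⪯ â(0)`, this gives `a ⪯ â`.
-/

def UpperRightDiniLE (f : ℝ → ℝ) (x c : ℝ) : Prop :=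
  ∀ r, c < r → ∀ᶠ z in 𝓝[>] x, slope f x z < r

namespace UpperRightDiniLE

variable {f g : ℝ → ℝ} {x c c' : ℝ}

lemma add (hf : UpperRightDiniLE f x c) (hg : UpperRightDiniLE g x c') :
    UpperRightDiniLE (f + g) x (c + c') := by
  intro r hr
  filter_upwards [hf (c + (r - c - c') / 2) (by linarith),
    hg (c' + (r - c - c') / 2) (by linarith)] with z hfz hgz
  rw [slope_def_field] at *
  rw [Pi.add_apply, Pi.add_apply, add_sub_add_comm, add_div]
  linarith

lemma sum {ι : Type*} {f : ι → ℝ → ℝ} {c : ι → ℝ} (s : Finset ι)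
    (h : ∀ i ∈ s, UpperRightDiniLE (f i) x (c i)) :
    UpperRightDiniLE (∑ i ∈ s, f i) x (∑ i ∈ s, c i) := by
  classical
  induction s using Finset.induction_on with
  | empty =>
    intro r hr
    filter_upwards with z
    simpa [slope_def_field] using hr
  | insert j s hj ih =>
    rw [Finset.sum_insert hj, Finset.sum_insert hj]
    exact (h j (s.mem_insert_self j)).add (ih fun i hi => h i (Finset.mem_insert_of_mem hi))

end UpperRightDiniLE

lemma upperRightDiniLE_posPart {f : ℝ → ℝ} {x c b : ℝ} (hf : HasDerivAt f c x)
    (hc : 0 ≤ f x → c ≤ b) (hb : 0 ≤ b) : UpperRightDiniLE (fun t => (f t)⁺) x b := by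
  intro r hr
  rcases lt_or_ge (f x) 0 with hx | hx
  · filter_upwards [(hf.continuousAt.eventually (gt_mem_nhds hx)).filter_mono
      nhdsWithin_le_nhds] with z hz
    rw [slope_def_field, posPart_eq_zero.2 hz.le, posPart_eq_zero.2 hx.le, sub_self, zero_div]
    linarith
  · filter_upwards [(hf.tendsto_slope.mono_left (nhdsGT_le_nhdsNE x)).eventually
      (gt_mem_nhds (lt_of_le_of_lt (hc hx) hr)), self_mem_nhdsWithin] with z hz hxz
    have hzx : 0 < z - x := sub_pos.2 hxz
    rw [slope_def_field] at hz ⊢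
    rw [posPart_eq_self.2 hx, div_lt_iff₀ hzx] at *
    rcases le_total (f z) 0 with h | h
    · rw [posPart_eq_zero.2 h]; nlinarith
    · rw [posPart_eq_self.2 h]; exact hz

lemma le_zero_of_upperRightDiniLE_mul {f : ℝ → ℝ} {a b K : ℝ} (hf : ContinuousOn f (Icc a b))
    (ha : f a ≤ 0) (hd : ∀ x ∈ Ico a b, UpperRightDiniLE f x (K * f x)) :
    ∀ x ∈ Icc a b, f x ≤ 0 := by
  intro x hx
  simpa [gronwallBound_ε0_δ0] using le_gronwallBound_of_liminf_deriv_right_le hf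
    (fun x hx r hr => (hd x hx r hr).frequently) ha (fun x _ => (add_zero _).ge) x hx

def Cooperative {ι : Type*} (g : (ι → ℝ) → ι → ℝ) : Prop :=
  ∀ ⦃x y : ι → ℝ⦄, x ≤ y → ∀ i, x i = y i → g x i ≤ g y i

section Comparison

variable {ι : Type*} [Fintype ι]

lemma dist_self_inf_le_sum_posPart (y z : ι → ℝ) : dist y (y ⊓ z) ≤ ∑ j, (y j - z j)⁺ := by
  refine (dist_pi_le_iff (Finset.sum_nonneg fun j _ => posPart_nonneg _)).2 fun j => ?_
  have hj : dist (y j) (min (y j) (z j)) = (y j - z j)⁺ := by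
    rcases le_total (y j) (z j) with h | h
    · simp [h]
    · simp [h, Real.dist_eq, abs_of_nonneg (sub_nonneg.2 h)]
  exact hj ▸ Finset.single_le_sum (fun j _ => posPart_nonneg (y j - z j)) (Finset.mem_univ j)

lemma Cooperative.apply_sub_apply_le {g : (ι → ℝ) → ι → ℝ} (hg : Cooperative g) {K : NNReal}
    {s : Set (ι → ℝ)} (hK : LipschitzOnWith K g s) {y z : ι → ℝ} (hy : y ∈ s) (hyz : y ⊓ z ∈ s)
    {i : ι} (hi : z i ≤ y i) : g y i - g z i ≤ K * ∑ j, (y j - z j)⁺ :=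
  calc g y i - g z i ≤ g y i - g (y ⊓ z) i :=
        sub_le_sub_left (hg inf_le_right i (inf_eq_right.2 hi)) _
    _ ≤ dist (g y) (g (y ⊓ z)) :=
        (le_abs_self _).trans ((Real.dist_eq _ _).ge.trans (dist_le_pi_dist _ _ i))
    _ ≤ K * dist y (y ⊓ z) := hK.dist_le_mul y hy _ hyz
    _ ≤ K * ∑ j, (y j - z j)⁺ := by gcongr; exact dist_self_inf_le_sum_posPart y z

theorem Cooperative.le_of_subsolution_of_supersolution {g : (ι → ℝ) → ι → ℝ}
    (hg : Cooperative g) (hlip : LocallyLipschitz g) {y z y' z' : ℝ → ι → ℝ} {t₀ : ℝ}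
    (hy : ∀ t ∈ Ici t₀, HasDerivAt y (y' t) t) (hz : ∀ t ∈ Ici t₀, HasDerivAt z (z' t) t)
    (hy' : ∀ t ∈ Ici t₀, y' t ≤ g (y t)) (hz' : ∀ t ∈ Ici t₀, g (z t) ≤ z' t)
    (h₀ : y t₀ ≤ z t₀) : ∀ t ∈ Ici t₀, y t ≤ z t := by
  intro T hT i
  have hsub : Icc t₀ T ⊆ Ici t₀ := Icc_subset_Ici_self
  have hyc : ContinuousOn y (Icc t₀ T) := fun t ht =>
    (hy t (hsub ht)).continuousAt.continuousWithinAt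
  have hzc : ContinuousOn z (Icc t₀ T) := fun t ht =>
    (hz t (hsub ht)).continuousAt.continuousWithinAt
  obtain ⟨K, hK⟩ := (hlip.locallyLipschitzOn
      (s := y '' Icc t₀ T ∪ (y ⊓ z) '' Icc t₀ T)).exists_lipschitzOnWith_of_compact
    ((isCompact_Icc.image_of_continuousOn hyc).union (isCompact_Icc.image_of_continuousOn
      (continuousOn_pi.2 fun j => (continuousOn_pi.1 hyc j).inf (continuousOn_pi.1 hzc j))))
  set M : ℝ → ℝ := fun t => ∑ j, (y t j - z t j)⁺
  have hM_nonneg : ∀ t, 0 ≤ M t := fun t => Finset.sum_nonneg fun j _ => posPart_nonneg _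
  have hMc : ContinuousOn M (Icc t₀ T) := continuousOn_finsetSum _ fun j _ =>
    ((continuousOn_pi.1 hyc j).sub (continuousOn_pi.1 hzc j)).sup continuousOn_const
  have hM₀ : M t₀ ≤ 0 := Finset.sum_nonpos fun j _ => posPart_nonpos.2 (sub_nonpos.2 (h₀ j))
  have hdini : ∀ t ∈ Ico t₀ T, UpperRightDiniLE M t ((Fintype.card ι * K) * M t) := by
    intro t ht
    have ht' : t ∈ Ici t₀ := ht.1
    have hslope : ∀ j, z t j ≤ y t j → y' t j - z' t j ≤ K * M t := fun j hj =>
      calc y' t j - z' t j ≤ g (y t) j - g (z t) j := by linarith [hy' t ht' j, hz' t ht' j]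
        _ ≤ K * M t := hg.apply_sub_apply_le hK (Or.inl ⟨t, Ico_subset_Icc_self ht, rfl⟩)
          (Or.inr ⟨t, Ico_subset_Icc_self ht, rfl⟩) hj
    have hterm : ∀ j ∈ Finset.univ, UpperRightDiniLE (fun s => (y s j - z s j)⁺) t (K * M t) :=
      fun j _ => upperRightDiniLE_posPart
        ((hasDerivAt_pi.1 (hy t ht') j).sub (hasDerivAt_pi.1 (hz t ht') j))
        (fun hj => hslope j (sub_nonneg.1 hj)) (mul_nonneg K.2 (hM_nonneg t))
    convert UpperRightDiniLE.sum Finset.univ hterm using 1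
    · ext s; simp [M]
    · simp [mul_assoc]
  have hMT := le_zero_of_upperRightDiniLE_mul hMc hM₀ hdini T ⟨hT, le_rfl⟩
  exact sub_nonpos.1 (posPart_nonpos.1 ((Finset.single_le_sum
    (fun j _ => posPart_nonneg (y T j - z T j)) (Finset.mem_univ i)).trans hMT))

theorem Cooperative.monotoneOn_of_zero_le {g : (ι → ℝ) → ι → ℝ} (hg : Cooperative g)
    (hlip : LocallyLipschitz g) {y : ℝ → ι → ℝ} {t₀ : ℝ}
    (hy : ∀ t ∈ Ici t₀, HasDerivAt y (g (y t)) t) (h₀ : 0 ≤ g (y t₀)) :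
    MonotoneOn y (Ici t₀) := by
  have hstart : ∀ t ∈ Ici t₀, y t₀ ≤ y t :=
    hg.le_of_subsolution_of_supersolution hlip (fun t _ => hasDerivAt_const t (y t₀)) hy
      (fun _ _ => h₀) (fun _ _ => le_rfl) le_rfl
  intro s hs t ht hst
  have hshift : ∀ r ∈ Ici t₀, HasDerivAt (fun r => y (r + (t - s))) (g (y (r + (t - s)))) r :=
    fun r hr => (hy _ (le_add_of_le_of_nonneg hr (sub_nonneg.2 hst))).comp_add_const r _
  simpa using hg.le_of_subsolution_of_supersolution hlip hy hshift (fun _ _ => le_rfl)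
    (fun _ _ => le_rfl) (hstart _ (le_add_of_le_of_nonneg le_rfl (sub_nonneg.2 hst))) s hs

lemma HasDerivAt.nonneg_of_monotoneOn_Ici {u : ℝ → ι → ℝ} {u' : ι → ℝ} {t : ℝ}
    (hu : HasDerivAt u u' t) (hmono : MonotoneOn u (Ici t)) : 0 ≤ u' :=
  ge_of_tendsto (hu.tendsto_slope.mono_left (nhdsGT_le_nhdsNE t)) <| by
    filter_upwards [self_mem_nhdsWithin] with z (hz : t < z)
    exact smul_nonneg (inv_nonneg.2 (sub_nonneg.2 hz.le))
      (sub_nonneg.2 (hmono (le_refl t) hz.le hz.le))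

end Comparison

lemma le_of_forall_update_le {ι α β : Type*} [Fintype ι] [DecidableEq ι] [Preorder α]
    [Preorder β] {f : (ι → α) → β} {x y : ι → α} (hxy : x ≤ y)
    (h : ∀ z ∈ Icc x y, ∀ j, f (update z j (x j)) ≤ f (update z j (y j))) : f x ≤ f y := by
  suffices ∀ s : Finset ι, f x ≤ f (s.piecewise y x) by simpa using this Finset.univ
  intro s
  induction s using Finset.induction_on with
  | empty => simp
  | insert j s hj ih =>
    calc f x ≤ f (s.piecewise y x) := ih
      _ = f (update (s.piecewise y x) j (x j)) := by
        rw [← Finset.piecewise_eq_of_notMem s y x hj, update_eq_self]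
      _ ≤ f ((insert j s).piecewise y x) := by
        rw [Finset.piecewise_insert]; exact h _ (s.piecewise_mem_Icc' hxy) j

section SouthEast

variable {ι : Type*}

def toSE (x xh : ι → ℝ) : ι ⊕ ι → ℝ := Sum.elim x (-xh)

lemma toSE_le_toSE_iff {x xh y yh : ι → ℝ} : toSE x xh ≤ toSE y yh ↔ x ≤ y ∧ yh ≤ xh := by
  simp [toSE, Sum.elim_le_elim_iff]

lemma toSE_zero : toSE (0 : ι → ℝ) 0 = 0 := by
  simp [toSE]

lemma HasDerivAt.toSE [Fintype ι] {a ah : ℝ → ι → ℝ} {a' ah' : ι → ℝ} {t : ℝ}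
    (ha : HasDerivAt a a' t) (hah : HasDerivAt ah ah' t) :
    HasDerivAt (fun t => toSE (a t) (ah t)) (toSE a' ah') t :=
  hasDerivAt_pi.2 fun
    | .inl i => hasDerivAt_pi.1 ha i
    | .inr i => (hasDerivAt_pi.1 hah i).neg

lemma lipschitzWith_toSE [Fintype ι] :
    LipschitzWith 1 fun p : (ι → ℝ) × (ι → ℝ) => toSE p.1 p.2 :=
  LipschitzWith.of_dist_le_mul fun p q => by
    rw [NNReal.coe_one, one_mul]
    refine (dist_pi_le_iff dist_nonneg).2 fun
      | .inl i => (dist_le_pi_dist p.1 q.1 i).trans (le_max_left _ _)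
      | .inr i => by
        simp only [toSE, Sum.elim_inr, Pi.neg_apply, dist_neg_neg]
        exact (dist_le_pi_dist p.2 q.2 i).trans (le_max_right _ _)

end SouthEast

lemma lipschitzWith_comp_right {ι κ : Type*} [Fintype ι] [Fintype κ] (f : κ → ι) :
    LipschitzWith 1 fun v : ι → ℝ => v ∘ f :=
  LipschitzWith.of_dist_le_mul fun v w => by
    rw [NNReal.coe_one, one_mul]
    exact (dist_pi_le_iff dist_nonneg).2 fun i => dist_le_pi_dist v w (f i)

/-- The embedding vector field `e` in the coordinates `toSE`. -/
def embeddingField {n m : ℕ}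
    (d : (Fin n → ℝ) → (Fin m → ℝ) → (Fin n → ℝ) → (Fin m → ℝ) → (Fin n → ℝ))
    (wl wu : Fin m → ℝ) (v : Fin n ⊕ Fin n → ℝ) : Fin n ⊕ Fin n → ℝ :=
  toSE (d (v ∘ Sum.inl) wl (-(v ∘ Sum.inr)) wu) (d (-(v ∘ Sum.inr)) wu (v ∘ Sum.inl) wl)

lemma embeddingField_toSE {n m : ℕ}
    (d : (Fin n → ℝ) → (Fin m → ℝ) → (Fin n → ℝ) → (Fin m → ℝ) → (Fin n → ℝ))
    (wl wu : Fin m → ℝ) (x xh : Fin n → ℝ) :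
    embeddingField d wl wu (toSE x xh) = toSE (d x wl xh wu) (d xh wu x wl) := by
  simp [embeddingField, toSE]

namespace IsDecompositionFunction

variable {n m : ℕ} {wl wu : Fin m → ℝ} {F : (Fin n → ℝ) → (Fin m → ℝ) → (Fin n → ℝ)}
  {d : (Fin n → ℝ) → (Fin m → ℝ) → (Fin n → ℝ) → (Fin m → ℝ) → (Fin n → ℝ)}

lemma apply_le_apply (hd : IsDecompositionFunction wl wu F d) {w wh : Fin m → ℝ}
    (hw : w ∈ Icc wl wu) (hwh : wh ∈ Icc wl wu) {x x' xh xh' : Fin n → ℝ} {i : Fin n}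
    (hx : x ≤ x') (hxi : x i = x' i) (hxh : xh' ≤ xh) :
    d x w xh wh i ≤ d x' w xh' wh i := by
  obtain ⟨-, -, hdx, hdxh, -, -⟩ := hd
  calc d x w xh wh i ≤ d x' w xh wh i :=
        le_of_forall_update_le (f := fun v => d v w xh wh i) hx fun z _ j => by
          rcases eq_or_ne j i with rfl | hji
          · rw [hxi]
          · exact hdx i j hji z xh _ _ (hx j) w hw wh hwh
    _ ≤ d x' w xh' wh i :=
        le_of_forall_update_le (f := fun v => OrderDual.toDual (d x' w v wh i)) hxh
          fun z _ j => hdxh i j x' z _ _ (hxh j) w hw wh hwh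

lemma apply_le_apply_of_disturbance (hd : IsDecompositionFunction wl wu F d)
    {w w' wh wh' : Fin m → ℝ} (hw : w ∈ Icc wl wu) (hw' : w' ∈ Icc wl wu)
    (hwh : wh ∈ Icc wl wu) (hwh' : wh' ∈ Icc wl wu) (hww : w ≤ w') (hwwh : wh' ≤ wh)
    (x xh : Fin n → ℝ) (i : Fin n) : d x w xh wh i ≤ d x w' xh wh' i := by
  obtain ⟨-, -, -, -, hdw, hdwh⟩ := hd
  calc d x w xh wh i ≤ d x w' xh wh i :=
        le_of_forall_update_le (f := fun v => d x v xh wh i) hww fun z hz k =>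
          hdw i k x xh _ _ (hw.1 k) (hww k) (hw'.2 k) z ⟨hw.1.trans hz.1, hz.2.trans hw'.2⟩
            wh hwh
    _ ≤ d x w' xh wh' i :=
        le_of_forall_update_le (f := fun v => OrderDual.toDual (d x w' xh v i)) hwwh
          fun z hz k => hdwh i k x xh _ _ (hwh'.1 k) (hwwh k) (hwh.2 k) w' hw' z
            ⟨hwh'.1.trans hz.1, hz.2.trans hwh.2⟩

lemma cooperative_embeddingField (hd : IsDecompositionFunction wl wu F d) (hwlu : wl ≤ wu) :
    Cooperative (embeddingField d wl wu) := by
  have hwl : wl ∈ Icc wl wu := left_mem_Icc.2 hwlu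
  have hwu : wu ∈ Icc wl wu := right_mem_Icc.2 hwlu
  intro v v' hv k hk
  have hx : v ∘ Sum.inl ≤ v' ∘ Sum.inl := fun i => hv _
  have hxh : -(v' ∘ Sum.inr) ≤ -(v ∘ Sum.inr) := fun i => neg_le_neg (hv _)
  cases k with
  | inl i => exact hd.apply_le_apply hwl hwu hx hk hxh
  | inr i => exact neg_le_neg (hd.apply_le_apply hwu hwl hxh (by simp [hk]) hx)

lemma locallyLipschitz_embeddingField (hd : IsDecompositionFunction wl wu F d) :
    LocallyLipschitz (embeddingField d wl wu) := by
  have hx := (lipschitzWith_comp_right (Sum.inl : Fin n → Fin n ⊕ Fin n)).locallyLipschitz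
  have hxh := (lipschitzWith_comp_right (Sum.inr : Fin n → Fin n ⊕ Fin n)).locallyLipschitz.neg
  have h₁ := hd.1.comp ((hx.prodMk (.const wl)).prodMk (hxh.prodMk (.const wu)))
  have h₂ := hd.1.comp ((hxh.prodMk (.const wu)).prodMk (hx.prodMk (.const wl)))
  exact lipschitzWith_toSE.locallyLipschitz.comp (h₁.prodMk h₂)

end IsDecompositionFunction

/-- Lemma 2: the set `𝒮 = {(x, x̂) : x ⪯ x̂ and 0 ⪯_SE e(x, x̂)}` is forward
invariant for the deterministic embedding system, and along solutions started in `𝒮` the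
state is nondecreasing with respect to the southeast order. -/
theorem S_forward_invariant_and_SE_monotone
    {n m : ℕ} (wl wu : Fin m → ℝ) (hwlu : wl ≤ wu)
    (F : (Fin n → ℝ) → (Fin m → ℝ) → (Fin n → ℝ))
    (d : (Fin n → ℝ) → (Fin m → ℝ) → (Fin n → ℝ) → (Fin m → ℝ) → (Fin n → ℝ))
    (hd : IsDecompositionFunction wl wu F d)
    -- (a, ah) is a solution of the deterministic embedding ODE on [0, ∞)
    (a ah : ℝ → (Fin n → ℝ))
    (ha : ∀ t ∈ Set.Ici (0:ℝ), HasDerivAt a (d (a t) wl (ah t) wu) t)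
    (hah : ∀ t ∈ Set.Ici (0:ℝ), HasDerivAt ah (d (ah t) wu (a t) wl) t)
    -- (a 0, ah 0) ∈ 𝒮
    (h0tri : a 0 ≤ ah 0)
    (h0SE : (0 : Fin n → ℝ) ≤ d (a 0) wl (ah 0) wu ∧ d (ah 0) wu (a 0) wl ≤ (0 : Fin n → ℝ)) :
    (∀ t ∈ Set.Ici (0:ℝ), a t ≤ ah t ∧
        (0 : Fin n → ℝ) ≤ d (a t) wl (ah t) wu ∧ d (ah t) wu (a t) wl ≤ (0 : Fin n → ℝ)) ∧
    (∀ t₁ t₂ : ℝ, 0 ≤ t₁ → t₁ ≤ t₂ → a t₁ ≤ a t₂ ∧ ah t₂ ≤ ah t₁) := by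
  have hwl : wl ∈ Icc wl wu := left_mem_Icc.2 hwlu
  have hwu : wu ∈ Icc wl wu := right_mem_Icc.2 hwlu
  have hcoop := hd.cooperative_embeddingField hwlu
  have hlip := hd.locallyLipschitz_embeddingField
  have hu : ∀ t ∈ Ici (0 : ℝ), HasDerivAt (fun t => toSE (a t) (ah t))
      (embeddingField d wl wu (toSE (a t) (ah t))) t := fun t ht => by
    rw [embeddingField_toSE]; exact (ha t ht).toSE (hah t ht)
  have hmono : MonotoneOn (fun t => toSE (a t) (ah t)) (Ici 0) :=
    hcoop.monotoneOn_of_zero_le hlip hu <| by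
      rwa [embeddingField_toSE, ← toSE_zero, toSE_le_toSE_iff]
  have hSE : ∀ t ∈ Ici (0 : ℝ), 0 ≤ d (a t) wl (ah t) wu ∧ d (ah t) wu (a t) wl ≤ 0 :=
    fun t ht => by
      have := (hu t ht).nonneg_of_monotoneOn_Ici (hmono.mono (Ici_subset_Ici.2 ht))
      rwa [embeddingField_toSE, ← toSE_zero, toSE_le_toSE_iff] at this
  have hdisturb : ∀ x xh, d x wl xh wu ≤ d x wu xh wl := fun x xh i =>
    hd.apply_le_apply_of_disturbance hwl hwu hwu hwl hwlu hwlu x xh i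
  have hswap : ∀ t ∈ Ici (0 : ℝ), HasDerivAt (fun t => toSE (ah t) (a t))
      (toSE (d (ah t) wu (a t) wl) (d (a t) wl (ah t) wu)) t := fun t ht =>
    (hah t ht).toSE (ha t ht)
  have hord : ∀ t ∈ Ici (0 : ℝ), a t ≤ ah t := fun t ht =>
    (toSE_le_toSE_iff.1 (hcoop.le_of_subsolution_of_supersolution hlip hu hswap
      (fun _ _ => le_rfl)
      (fun t _ => by rw [embeddingField_toSE, toSE_le_toSE_iff]; exact ⟨hdisturb _ _, hdisturb _ _⟩)
      (toSE_le_toSE_iff.2 ⟨h0tri, h0tri⟩) t ht)).1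
  exact ⟨fun t ht => ⟨hord t ht, hSE t ht⟩, fun t₁ t₂ h₁ h₁₂ =>
    toSE_le_toSE_iff.1 (hmono h₁ (h₁.trans h₁₂) h₁₂)⟩
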